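/- Let H_1, ..., H_T be Hermitian complex N×N matrices, let v ∈ ℂ^N be a unit vector (⟨v, v⟩ = 1), let M be the quantum correlation matrix with entries M_{ij} = (1/2)·⟨v, (H_i H_j + H_j H_i) v⟩ − ⟨v, H_i v⟩·⟨v, H_j v⟩, and let w ∈ ℝ^T. If v is an eigenvector of H = Σ_{i=1}^T w_i H_i (i.e., H v = λ v for some scalar λ), then w lies in the null space of M, i.e., M w = 0. -/
import Mathlib


open Matrix

lemma my_sum_mulVec {ι : Type*} {N M : ℕ} (s : Finset ι) (f : ι → Matrix (Fin M) (Fin N) ℂ)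
    (x : Fin N → ℂ) : (∑ i ∈ s, f i) *ᵥ x = ∑ i ∈ s, f i *ᵥ x :=
  map_sum (AddMonoidHom.mk' (fun A : Matrix (Fin M) (Fin N) ℂ => A *ᵥ x)
    (fun A B => Matrix.add_mulVec A B x)) f s

lemma my_dot_sum {ι : Type*} {N : ℕ} (s : Finset ι) (v : Fin N → ℂ) (f : ι → Fin N → ℂ) :
    v ⬝ᵥ (∑ i ∈ s, f i) = ∑ i ∈ s, v ⬝ᵥ f i :=
  map_sum (AddMonoidHom.mk' (fun y : Fin N → ℂ => v ⬝ᵥ y)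
    (fun a b => dotProduct_add v a b)) f s

lemma my_mulVec_sum {ι : Type*} {N M : ℕ} (s : Finset ι) (B : Matrix (Fin M) (Fin N) ℂ)
    (f : ι → Fin N → ℂ) : B *ᵥ (∑ i ∈ s, f i) = ∑ i ∈ s, B *ᵥ f i :=
  map_sum (AddMonoidHom.mk' (fun y : Fin N → ℂ => B *ᵥ y)
    (fun a b => Matrix.mulVec_add B a b)) f s

/-- If the unit vector `v` is an eigenvector of
`H = Σᵢ wᵢ Hᵢ`, then the real vector `w` lies in the null space of the
quantum correlation matrix `M`, i.e. `M w = 0`. -/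
theorem eigenvector_gives_null_space_qcm {N T : ℕ}
    (H : Fin T → Matrix (Fin N) (Fin N) ℂ)
    (hH : ∀ i, (H i).IsHermitian) (v : Fin N → ℂ) (hv : star v ⬝ᵥ v = 1)
    (M : Matrix (Fin T) (Fin T) ℂ)
    (hM : ∀ i j, M i j =
      (1 / 2 : ℂ) * (star v ⬝ᵥ ((H i * H j + H j * H i) *ᵥ v))
        - (star v ⬝ᵥ (H i *ᵥ v)) * (star v ⬝ᵥ (H j *ᵥ v)))
    (w : Fin T → ℝ) (l : ℂ)
    (heig : (∑ i, (w i : ℂ) • H i) *ᵥ v = l • v) :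
    M *ᵥ (fun i => (w i : ℂ)) = 0 := by
  set A : Matrix (Fin N) (Fin N) ℂ := ∑ i, (w i : ℂ) • H i with hA_def
  have hA : Aᴴ = A := by
    rw [hA_def, Matrix.conjTranspose_sum]
    refine Finset.sum_congr rfl fun i _ => ?_
    rw [Matrix.conjTranspose_smul, (hH i).eq]
    simp [Complex.star_def, Complex.conj_ofReal]
  have hAapp : ∀ x : Fin N → ℂ, A *ᵥ x = ∑ j, (w j : ℂ) • (H j *ᵥ x) := by
    intro x
    rw [hA_def, my_sum_mulVec]
    exact Finset.sum_congr rfl fun j _ => Matrix.smul_mulVec _ _ _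
  have hadj : ∀ x : Fin N → ℂ, star v ⬝ᵥ (A *ᵥ x) = star (A *ᵥ v) ⬝ᵥ x := by
    intro x
    rw [Matrix.star_mulVec, hA, ← Matrix.dotProduct_mulVec]
  have hl : (starRingEnd ℂ) l = l := by
    have h1 : star (A *ᵥ v) ⬝ᵥ v = (starRingEnd ℂ) l := by
      rw [heig]
      simp [star_smul, smul_dotProduct, hv]
    have h2 : star v ⬝ᵥ (A *ᵥ v) = l := by
      rw [heig]
      simp [dotProduct_smul, hv]
    rw [← h1, ← hadj, h2]
  have hai : ∀ x, star v ⬝ᵥ (A *ᵥ x) = l * (star v ⬝ᵥ x) := by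
    intro x
    rw [hadj, heig]
    simp [star_smul, smul_dotProduct, hl]
  have key : ∀ x : Fin N → ℂ,
      ∑ j, (w j : ℂ) * (star v ⬝ᵥ (H j *ᵥ x)) = l * (star v ⬝ᵥ x) := by
    intro x
    rw [← hai x, hAapp x, my_dot_sum]
    exact Finset.sum_congr rfl fun j _ => by
      rw [dotProduct_smul]; simp
  have key2 : ∀ B : Matrix (Fin N) (Fin N) ℂ,
      ∑ j, (w j : ℂ) * (star v ⬝ᵥ (B *ᵥ (H j *ᵥ v)))
        = l * (star v ⬝ᵥ (B *ᵥ v)) := by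
    intro B
    have step : ∀ j, (w j : ℂ) * (star v ⬝ᵥ (B *ᵥ (H j *ᵥ v)))
        = star v ⬝ᵥ (B *ᵥ ((w j : ℂ) • (H j *ᵥ v))) := fun j => by
      rw [Matrix.mulVec_smul, dotProduct_smul, smul_eq_mul]
    rw [Finset.sum_congr rfl fun j _ => step j, ← my_dot_sum, ← my_mulVec_sum,
      ← hAapp, heig, Matrix.mulVec_smul, dotProduct_smul, smul_eq_mul]
  funext i
  show ∑ j, M i j * (w j : ℂ) = 0
  have expand : ∑ j, M i j * (w j : ℂ) =
      (1/2 : ℂ) * (∑ j, (w j : ℂ) * (star v ⬝ᵥ (H i *ᵥ (H j *ᵥ v))))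
      + (1/2 : ℂ) * (∑ j, (w j : ℂ) * (star v ⬝ᵥ (H j *ᵥ (H i *ᵥ v))))
      - (star v ⬝ᵥ (H i *ᵥ v)) * (∑ j, (w j : ℂ) * (star v ⬝ᵥ (H j *ᵥ v))) := by
    rw [Finset.mul_sum, Finset.mul_sum, Finset.mul_sum,
      ← Finset.sum_add_distrib, ← Finset.sum_sub_distrib]
    refine Finset.sum_congr rfl fun j _ => ?_
    rw [hM i j, Matrix.add_mulVec, dotProduct_add,
      ← Matrix.mulVec_mulVec, ← Matrix.mulVec_mulVec]
    ring
  rw [expand, key2 (H i), key (H i *ᵥ v), key v, hv]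
  ring
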